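/- arXiv:1912.13323 — 7 statements merged into one kernel-verified Lean document; each statement's English description precedes it below -/
import Mathlib

section
/- For every finite simple graph G with n ≥ 1 vertices, G admits a k-total difference labeling for k = 3^(n-1); in particular the total difference chromatic number satisfies χ_td(G) ≤ 3^(n-1) (and χ_td(G) is well-defined). -/
open SimpleGraph

/-- A `k`-total difference labeling of `G`: a proper vertex labeling `c` with labels in
`{1,…,k}` such that the induced edge label `|c u - c v|` of each edge differs from the
labels of its two incident vertices, and distinct edges sharing a vertex receive
distinct induced labels. -/
def IsTotalDiffLabeling {V : Type*} (G : SimpleGraph V) (k : ℕ) (c : V → ℕ) : Prop :=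
  (∀ v, 1 ≤ c v ∧ c v ≤ k) ∧
  (∀ u v, G.Adj u v → c u ≠ c v) ∧
  (∀ u v, G.Adj u v → Nat.dist (c u) (c v) ≠ c u ∧ Nat.dist (c u) (c v) ≠ c v) ∧
  (∀ u v w, G.Adj u v → G.Adj v w → u ≠ w →
    Nat.dist (c u) (c v) ≠ Nat.dist (c v) (c w))

/-- The total difference chromatic number of `G`: the least `k` for which `G` admits a
`k`-total difference labeling. -/
noncomputable def tdChromatic {V : Type*} (G : SimpleGraph V) : ℕ :=
  sInf {k | ∃ c : V → ℕ, IsTotalDiffLabeling G k c}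

/-! Label the vertices by distinct powers of `3` (any base `b ≥ 3` works). For `i < j` the
difference `3 ^ j - 3 ^ i = 3 ^ i (3 ^ (j - i) - 1)` has a cofactor that is `≡ -1 (mod 3)` and at
least `2`, so it is never a power of `3`, and the pair `(i, j)` can be read off it: `i` is its
`3`-adic valuation, and then `j` is determined by the cofactor. The first fact separates edge labels
from vertex labels, the second makes the edge labels at a vertex distinct. -/

namespace Nat

variable {b : ℕ}

lemma not_dvd_pow_sub_one (hb : 2 ≤ b) {d : ℕ} (hd : d ≠ 0) : ¬b ∣ b ^ d - 1 := by
  intro h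
  have hpos : 1 ≤ b ^ d := one_le_pow _ _ (by omega)
  have : b ∣ b ^ d - (b ^ d - 1) := Nat.dvd_sub (dvd_pow_self b hd) h
  rw [Nat.sub_sub_self hpos] at this
  exact absurd (Nat.le_of_dvd one_pos this) (by omega)

lemma pow_sub_pow_eq_pow_mul {i j : ℕ} (hij : i ≤ j) :
    b ^ j - b ^ i = b ^ i * (b ^ (j - i) - 1) := by
  rw [Nat.mul_sub_one, ← pow_add, Nat.add_sub_cancel' hij]

lemma eq_and_eq_of_pow_mul_eq_pow_mul (hb : 0 < b) {i k m m' : ℕ} (hm : ¬b ∣ m)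
    (hm' : ¬b ∣ m') (h : b ^ i * m = b ^ k * m') : i = k ∧ m = m' := by
  wlog hik : i ≤ k generalizing i k m m'
  · obtain ⟨hki, hmm'⟩ := this hm' hm h.symm (by omega)
    exact ⟨hki.symm, hmm'.symm⟩
  have hm_eq : m = b ^ (k - i) * m' := by
    rw [← Nat.add_sub_cancel' hik, pow_add, mul_assoc] at h
    exact Nat.eq_of_mul_eq_mul_left (pow_pos hb i) h
  obtain hki | hki := eq_or_ne (k - i) 0
  · exact ⟨by omega, by simpa [hki] using hm_eq⟩
  · exact absurd (hm_eq ▸ (dvd_pow_self b hki).mul_right m') hm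

lemma pow_sub_pow_ne_pow (hb : 3 ≤ b) {i j : ℕ} (hij : i < j) (a : ℕ) :
    b ^ j - b ^ i ≠ b ^ a := by
  intro h
  rw [pow_sub_pow_eq_pow_mul hij.le, ← mul_one (b ^ a)] at h
  obtain ⟨-, hone⟩ := eq_and_eq_of_pow_mul_eq_pow_mul (by omega)
    (not_dvd_pow_sub_one (by omega) (by omega)) (Nat.dvd_one.not.mpr (by omega)) h
  have : b ≤ b ^ (j - i) := le_self_pow (by omega) b
  omega

lemma eq_and_eq_of_pow_sub_pow_eq (hb : 2 ≤ b) {i j k l : ℕ} (hij : i < j) (hkl : k < l)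
    (h : b ^ j - b ^ i = b ^ l - b ^ k) : i = k ∧ j = l := by
  rw [pow_sub_pow_eq_pow_mul hij.le, pow_sub_pow_eq_pow_mul hkl.le] at h
  obtain ⟨rfl, hcof⟩ := eq_and_eq_of_pow_mul_eq_pow_mul (by omega)
    (not_dvd_pow_sub_one hb (by omega)) (not_dvd_pow_sub_one hb (by omega)) h
  have h1 : 1 ≤ b ^ (j - i) := one_le_pow _ _ (by omega)
  have h2 : 1 ≤ b ^ (l - i) := one_le_pow _ _ (by omega)
  have := Nat.pow_right_injective hb (show b ^ (j - i) = b ^ (l - i) by omega)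
  omega

lemma dist_pow_pow (hb : 1 ≤ b) (i j : ℕ) :
    dist (b ^ i) (b ^ j) = b ^ max i j - b ^ min i j := by
  rcases le_total i j with hij | hji
  · rw [max_eq_right hij, min_eq_left hij, dist_eq_sub_of_le (Nat.pow_le_pow_right hb hij)]
  · rw [max_eq_left hji, min_eq_right hji, dist_comm,
      dist_eq_sub_of_le (Nat.pow_le_pow_right hb hji)]

lemma dist_pow_pow_ne_pow (hb : 3 ≤ b) {i j : ℕ} (hij : i ≠ j) (a : ℕ) :
    dist (b ^ i) (b ^ j) ≠ b ^ a := by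
  rw [dist_pow_pow (by omega)]
  exact pow_sub_pow_ne_pow hb (by omega) a

lemma eq_of_dist_pow_pow_eq_dist_pow_pow (hb : 2 ≤ b) {i j k : ℕ} (hij : i ≠ j)
    (hjk : j ≠ k) (h : dist (b ^ i) (b ^ j) = dist (b ^ j) (b ^ k)) : i = k := by
  rw [dist_pow_pow (by omega), dist_pow_pow (by omega)] at h
  have := eq_and_eq_of_pow_sub_pow_eq hb (by omega) (by omega) h
  omega

end Nat

lemma isTotalDiffLabeling_pow_comp {V : Type*} (G : SimpleGraph V) {b : ℕ} (hb : 3 ≤ b)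
    {ι : V → ℕ} (hι : Function.Injective ι) {k : ℕ} (hk : ∀ v, b ^ ι v ≤ k) :
    IsTotalDiffLabeling G k (fun v => b ^ ι v) := by
  have hne {u v : V} (huv : G.Adj u v) : ι u ≠ ι v := hι.ne huv.ne
  refine ⟨fun v => ⟨Nat.one_le_pow _ _ (by omega), hk v⟩, ?_, ?_, ?_⟩
  · intro u v huv hc
    exact hne huv (Nat.pow_right_injective (by omega) hc)
  · intro u v huv
    exact ⟨Nat.dist_pow_pow_ne_pow hb (hne huv) _, Nat.dist_pow_pow_ne_pow hb (hne huv) _⟩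
  · intro u v w huv hvw huw hc
    exact huw (hι (Nat.eq_of_dist_pow_pow_eq_dist_pow_pow (by omega) (hne huv) (hne hvw) hc))

theorem tdChromatic_le_three_pow_general {V : Type*} [Fintype V] (G : SimpleGraph V) (n : ℕ)
    (hcard : Fintype.card V = n) :
    (∃ c : V → ℕ, IsTotalDiffLabeling G (3 ^ (n - 1)) c) ∧
    tdChromatic G ≤ 3 ^ (n - 1) := by
  let e := Fintype.equivFinOfCardEq hcard
  have hc : IsTotalDiffLabeling G (3 ^ (n - 1)) (fun v => 3 ^ (e v : ℕ)) :=
    isTotalDiffLabeling_pow_comp G le_rfl (Fin.val_injective.comp e.injective)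
      fun v => Nat.pow_le_pow_right (by norm_num) (Nat.le_sub_one_of_lt (e v).isLt)
  exact ⟨⟨_, hc⟩, Nat.sInf_le ⟨_, hc⟩⟩

/-- Every finite simple graph on `n ≥ 1` vertices admits a `3^(n-1)`-total difference
labeling, and hence `χ_td(G) ≤ 3^(n-1)`. -/
theorem tdChromatic_le_three_pow {V : Type*} [Fintype V] (G : SimpleGraph V) (n : ℕ)
    (hcard : Fintype.card V = n) (hn : 1 ≤ n) :
    (∃ c : V → ℕ, IsTotalDiffLabeling G (3 ^ (n - 1)) c) ∧
    tdChromatic G ≤ 3 ^ (n - 1) :=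
  tdChromatic_le_three_pow_general G n hcard
end

section
/- If G is a connected finite simple graph with n vertices whose diameter is at most 2, then χ_td(G) ≥ n, and in any k-total difference labeling of G all vertices receive pairwise distinct labels. -/
open SimpleGraph

/-! Equal labels at distance `1` contradict properness, and equal labels at distance `2`
would give the two edges through a common neighbour the same induced label. So in diameter at
most `2` every total difference labeling is injective into `{1,…,k}`, forcing `n ≤ k`.
To bound `χ_td`, the infimum defining it must range over a nonempty set (an empty `sInf` is
`0`): distinct powers of `b ≥ 3` always form a labeling, because for `i < j` the gap
`b^j - b^i` is at least `2 b^i` and less than `b^j`, so no induced label can repeat a vertex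
label or an induced label on the other side of the same vertex. -/

open Function

namespace Nat

variable {b : ℕ}

theorem three_mul_pow_le_or_eq_or (hb : 3 ≤ b) (i j : ℕ) :
    3 * b ^ i ≤ b ^ j ∨ i = j ∨ 3 * b ^ j ≤ b ^ i := by
  have step : ∀ {p q : ℕ}, p < q → 3 * b ^ p ≤ b ^ q := fun {p q} h =>
    calc 3 * b ^ p ≤ b * b ^ p := Nat.mul_le_mul_right _ hb
      _ = b ^ (p + 1) := (Nat.pow_succ' ..).symm
      _ ≤ b ^ q := Nat.pow_le_pow_right (by omega) h
  rcases lt_trichotomy i j with h | h | h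
  exacts [.inl (step h), .inr (.inl h), .inr (.inr (step h))]

theorem dist_pow_pow_ne_pow_left (hb : 3 ≤ b) {i j : ℕ} (h : i ≠ j) :
    Nat.dist (b ^ i) (b ^ j) ≠ b ^ i := by
  have := Nat.pow_pos (n := i) (by omega : 0 < b)
  have := Nat.pow_pos (n := j) (by omega : 0 < b)
  unfold Nat.dist
  rcases three_mul_pow_le_or_eq_or hb i j with hij | rfl | hij
  · omega
  · exact absurd rfl h
  · omega

theorem dist_pow_pow_left_injective (hb : 3 ≤ b) (j : ℕ) :
    Injective fun i => Nat.dist (b ^ i) (b ^ j) := by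
  intro i m h
  apply Nat.pow_right_injective (by omega : 2 ≤ b)
  have := Nat.pow_pos (n := j) (by omega : 0 < b)
  simp only [Nat.dist] at h ⊢
  have hm := three_mul_pow_le_or_eq_or hb m j
  rcases three_mul_pow_le_or_eq_or hb i j with hij | rfl | hij <;>
    rcases hm with hmj | rfl | hmj <;> omega

end Nat

section

variable {V : Type*} {G : SimpleGraph V}

theorem isTotalDiffLabeling_pow {b : ℕ} (hb : 3 ≤ b) {f : V → ℕ} (hf : Injective f) {N : ℕ}
    (hN : ∀ v, f v < N) : IsTotalDiffLabeling G (b ^ N) fun v => b ^ f v := by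
  have hne : ∀ {u v}, G.Adj u v → f u ≠ f v := fun huv h => huv.ne (hf h)
  refine ⟨fun v => ⟨Nat.one_le_pow _ _ (by omega), Nat.pow_le_pow_right (by omega) (hN v).le⟩,
    fun u v huv h => hne huv (Nat.pow_right_injective (by omega) h),
    fun u v huv => ⟨Nat.dist_pow_pow_ne_pow_left hb (hne huv), ?_⟩,
    fun u v w huv hvw huw h => huw (hf (Nat.dist_pow_pow_left_injective hb (f v) ?_))⟩
  · rw [Nat.dist_comm]
    exact Nat.dist_pow_pow_ne_pow_left hb (hne huv.symm)
  · simpa only [Nat.dist_comm (b ^ f w)] using h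

theorem exists_isTotalDiffLabeling [Finite V] : ∃ k c, IsTotalDiffLabeling G k c := by
  obtain ⟨n, ⟨e⟩⟩ := Finite.exists_equiv_fin V
  exact ⟨_, _, isTotalDiffLabeling_pow le_rfl (Fin.val_injective.comp e.injective)
    fun v => (e v).isLt⟩

theorem le_tdChromatic [Finite V] {n : ℕ}
    (h : ∀ k c, IsTotalDiffLabeling G k c → n ≤ k) : n ≤ tdChromatic G := by
  obtain ⟨k, c, hc⟩ := exists_isTotalDiffLabeling (G := G)
  exact le_csInf ⟨k, c, hc⟩ fun k ⟨c, hc⟩ => h k c hc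

namespace IsTotalDiffLabeling

variable {k : ℕ} {c : V → ℕ}

theorem card_le [Fintype V] (hc : IsTotalDiffLabeling G k c) (hinj : Injective c) :
    Fintype.card V ≤ k := by
  simpa using Finset.card_le_card_of_injOn c (s := Finset.univ) (t := Finset.Icc 1 k)
    (fun v _ => Finset.mem_Icc.2 (hc.1 v)) hinj.injOn

theorem ne_of_dist_le_two (hc : IsTotalDiffLabeling G k c) {u w : V} (hd₀ : G.dist u w ≠ 0)
    (hd : G.dist u w ≤ 2) : c u ≠ c w := by
  obtain ⟨-, hproper, -, hdistinct⟩ := hc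
  have huw := (dist_ne_zero_iff_ne_and_reachable.mp hd₀).1
  obtain ⟨p, hp⟩ := G.exists_walk_of_dist_ne_zero hd₀
  rw [← hp] at hd
  intro h
  match p, hd with
  | .nil, _ => exact huw rfl
  | .cons hadj .nil, _ => exact hproper u w hadj h
  | .cons (v := v) huv (.cons hvw .nil), _ =>
    exact hdistinct u v w huv hvw huw (by rw [h, Nat.dist_comm])
  | .cons _ (.cons _ (.cons _ _)), hd => simp at hd

theorem injective_of_dist_le_two (hc : IsTotalDiffLabeling G k c) (hconn : G.Preconnected)
    (hdiam : ∀ u v : V, G.dist u v ≤ 2) : Injective c := fun u w h => by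
  by_contra huw
  exact hc.ne_of_dist_le_two
    (dist_ne_zero_iff_ne_and_reachable.mpr ⟨huw, hconn u w⟩) (hdiam u w) h

end IsTotalDiffLabeling

end

/-- If `G` is a connected finite simple graph of diameter at most `2` on `n` vertices,
then `χ_td(G) ≥ n`, and any total difference labeling of `G` assigns pairwise distinct
labels to the vertices. -/
theorem tdChromatic_ge_card_of_diam_le_two {V : Type*} [Fintype V] (G : SimpleGraph V)
    (hconn : G.Connected) (hdiam : ∀ u v : V, G.dist u v ≤ 2) :
    Fintype.card V ≤ tdChromatic G ∧
    ∀ (k : ℕ) (c : V → ℕ), IsTotalDiffLabeling G k c → Function.Injective c := by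
  have hinj : ∀ k c, IsTotalDiffLabeling G k c → Injective c :=
    fun _ _ hc => hc.injective_of_dist_le_two hconn.preconnected hdiam
  exact ⟨le_tdChromatic fun k c hc => hc.card_le (hinj k c hc), hinj⟩
end

section
/- For every path P_n on n vertices with n ≥ 4, the total difference chromatic number satisfies χ_td(P_n) = 4. -/
open SimpleGraph

/-!
With labels in `{1, 2, 3}` the only admissible edges are `{1, 3}` (difference `2`) and
`{2, 3}` (difference `1`). Hence the middle vertex of any path `u v w` is labelled `3`:
otherwise `u` and `w` are both labelled `3` and the two edges get the same difference.
A path on four vertices then has two adjacent middle vertices, both labelled `3`, so no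
`3`-labeling exists. Conversely, the periodic labeling `3, 1, 4, 3, 1, 4, …` has edge
differences `2, 3, 1, 2, 3, 1, …` and is a `4`-labeling of every path.
-/

namespace IsTotalDiffLabeling

variable {V : Type*} {G : SimpleGraph V} {k : ℕ} {c : V → ℕ}

theorem tdChromatic_le (hc : IsTotalDiffLabeling G k c) : tdChromatic G ≤ k :=
  Nat.sInf_le ⟨c, hc⟩

theorem eq_three_of_adj_of_adj (hc : IsTotalDiffLabeling G k c) (hk : k ≤ 3) {u v w : V}
    (huv : G.Adj u v) (hvw : G.Adj v w) (huw : u ≠ w) : c v = 3 := by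
  obtain ⟨hbound, hproper, hvertex, hedge⟩ := hc
  have hu := hbound u
  have hv := hbound v
  have hw := hbound w
  have huv' := hproper u v huv
  have hvw' := hproper v w hvw
  have hdist_uv := hvertex u v huv
  have hdist_vw := hvertex v w hvw
  have hdist := hedge u v w huv hvw huw
  simp only [Nat.dist] at hdist_uv hdist_vw hdist
  omega

theorem four_le (hc : IsTotalDiffLabeling G k c) {u v w x : V} (huv : G.Adj u v)
    (hvw : G.Adj v w) (hwx : G.Adj w x) (huw : u ≠ w) (hvx : v ≠ x) : 4 ≤ k := by
  by_contra! hk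
  have hv := hc.eq_three_of_adj_of_adj (by omega) huv hvw huw
  have hw := hc.eq_three_of_adj_of_adj (by omega) hvw hwx hvx
  exact hc.2.1 v w hvw (hv.trans hw.symm)

end IsTotalDiffLabeling

def periodicLabel (i : ℕ) : ℕ :=
  if i % 3 = 0 then 3 else if i % 3 = 1 then 1 else 4

theorem isTotalDiffLabeling_pathGraph_periodicLabel (n : ℕ) :
    IsTotalDiffLabeling (pathGraph n) 4 (fun i => periodicLabel i) := by
  refine ⟨fun v => ?_, fun u v huv => ?_, fun u v huv => ?_, fun u v w huv hvw huw => ?_⟩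
  all_goals dsimp only [periodicLabel, Nat.dist]
  · split_ifs <;> omega
  · rw [pathGraph_adj] at huv
    split_ifs <;> omega
  · rw [pathGraph_adj] at huv
    split_ifs <;> omega
  · rw [pathGraph_adj] at huv hvw
    have huw' : u.val ≠ w.val := Fin.val_ne_of_ne huw
    split_ifs <;> omega

/-- For every path `P_n` with `n ≥ 4`, `χ_td(P_n) = 4`. -/
theorem tdChromatic_pathGraph (n : ℕ) (hn : 4 ≤ n) :
    tdChromatic (pathGraph n) = 4 := by
  have hlabel := isTotalDiffLabeling_pathGraph_periodicLabel n
  refine le_antisymm hlabel.tdChromatic_le (le_csInf ⟨4, _, hlabel⟩ ?_)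
  rintro k ⟨c, hc⟩
  let v (i : ℕ) (hi : i < n) : Fin n := ⟨i, hi⟩
  have hadj (i : ℕ) (hi : i + 1 < n) : (pathGraph n).Adj (v i (by omega)) (v (i + 1) hi) := by
    simp [v, pathGraph_adj]
  exact hc.four_le (hadj 0 (by omega)) (hadj 1 (by omega)) (hadj 2 (by omega))
    (by simp [v]) (by simp [v])
end

section
/- For every cycle C_n with n ≥ 3, the total difference chromatic number is χ_td(C_n) = 4 if n ≡ 0 (mod 3), and χ_td(C_n) = 5 otherwise. -/
open SimpleGraph

/-!
On a cycle, a labeling is a total difference labeling iff every three consecutive labels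
`a, b, d` satisfy the local conditions `IsTotalDiffPath a b d`. With labels in `{1, 2, 3}` the
middle label of such a triple must be `3`, so two adjacent vertices would both be labelled `3`.
With labels in `{1, …, 4}` the label `2` cannot occur, so any three consecutive labels are
`1, 3, 4` in some order; the labeling is then `3`-periodic, which for `3 ∤ n` forces two adjacent
vertices to share a label. Conversely, the words `1 3 4`, `1 3 2 5` and `1 3 2 5 4` label
`C_3`, `C_4` and `C_5`, and prefixing the block `1 3 4` to a labeling word that starts with `1 3`
labels the cycle three vertices longer.
-/

open Fin.CommRing

def IsTotalDiffEdge (a b : ℕ) : Prop := a ≠ b ∧ Nat.dist a b ≠ a ∧ Nat.dist a b ≠ b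

def IsTotalDiffPath (a b d : ℕ) : Prop :=
  IsTotalDiffEdge a b ∧ IsTotalDiffEdge b d ∧ Nat.dist a b ≠ Nat.dist b d

instance (a b : ℕ) : Decidable (IsTotalDiffEdge a b) := inferInstanceAs (Decidable (_ ∧ _))

instance (a b d : ℕ) : Decidable (IsTotalDiffPath a b d) := inferInstanceAs (Decidable (_ ∧ _))

theorem IsTotalDiffEdge.symm {a b : ℕ} (h : IsTotalDiffEdge a b) : IsTotalDiffEdge b a := by
  obtain ⟨hab, ha, hb⟩ := h
  exact ⟨hab.symm, Nat.dist_comm a b ▸ hb, Nat.dist_comm a b ▸ ha⟩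

theorem IsTotalDiffPath.symm {a b d : ℕ} (h : IsTotalDiffPath a b d) :
    IsTotalDiffPath d b a := by
  obtain ⟨hab, hbd, hne⟩ := h
  refine ⟨hbd.symm, hab.symm, ?_⟩
  rw [Nat.dist_comm d b, Nat.dist_comm b a]
  exact hne.symm

theorem IsTotalDiffPath.eq_three {a b d : ℕ} (h : IsTotalDiffPath a b d) (ha : a ≤ 3)
    (hb : b ≤ 3) (hd : d ≤ 3) : b = 3 := by
  simp only [IsTotalDiffPath, IsTotalDiffEdge, Nat.dist] at h
  omega

theorem IsTotalDiffPath.ne_two {a b d : ℕ} (h : IsTotalDiffPath a b d) (ha : a ≤ 4)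
    (hd : d ≤ 4) : b ≠ 2 := by
  simp only [IsTotalDiffPath, IsTotalDiffEdge, Nat.dist] at h
  omega

theorem IsTotalDiffPath.add_eq_eight {a b d : ℕ} (h : IsTotalDiffPath a b d) (ha : a ≤ 4)
    (hb : b ≤ 4) (hd : d ≤ 4) (ha2 : a ≠ 2) (hb2 : b ≠ 2) (hd2 : d ≠ 2) : a + b + d = 8 := by
  simp only [IsTotalDiffPath, IsTotalDiffEdge, Nat.dist] at h
  omega

theorem cycleGraph_adj_iff_eq_add_one {n : ℕ} {u v : Fin (n + 2)} :
    (cycleGraph (n + 2)).Adj u v ↔ u = v + 1 ∨ v = u + 1 := by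
  rw [cycleGraph_adj, sub_eq_iff_eq_add, sub_eq_iff_eq_add, add_comm 1 v, add_comm 1 u]

theorem isTotalDiffLabeling_cycleGraph_iff {n k : ℕ} {c : Fin (n + 3) → ℕ} :
    IsTotalDiffLabeling (cycleGraph (n + 3)) k c ↔
      (∀ i, 1 ≤ c i ∧ c i ≤ k) ∧ ∀ i, IsTotalDiffPath (c i) (c (i + 1)) (c (i + 2)) := by
  have two : ∀ i : Fin (n + 3), i + 1 + 1 = i + 2 := fun i => by
    rw [add_assoc, one_add_one_eq_two]
  have adj : ∀ i : Fin (n + 3), (cycleGraph (n + 3)).Adj i (i + 1) := fun i =>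
    cycleGraph_adj_iff_eq_add_one.2 (Or.inr rfl)
  constructor
  · rintro ⟨hbound, hne, hdist, hpath⟩
    have hedge : ∀ i, IsTotalDiffEdge (c i) (c (i + 1)) := fun i =>
      ⟨hne _ _ (adj i), hdist _ _ (adj i)⟩
    have hi : ∀ i : Fin (n + 3), i ≠ i + 2 := fun i => by
      simp [Fin.ext_iff, Nat.mod_eq_of_lt (show 2 < n + 3 by omega)]
    refine ⟨hbound, fun i => ⟨hedge i, two i ▸ hedge (i + 1), ?_⟩⟩
    exact two i ▸ hpath _ _ _ (adj i) (adj (i + 1)) (two i ▸ hi i)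
  · rintro ⟨hbound, hpath⟩
    have hedge : ∀ u v, (cycleGraph (n + 3)).Adj u v → IsTotalDiffEdge (c u) (c v) := by
      intro u v huv
      rcases cycleGraph_adj_iff_eq_add_one.1 huv with rfl | rfl
      · exact (hpath v).1.symm
      · exact (hpath u).1
    refine ⟨hbound, fun u v huv => (hedge u v huv).1, fun u v huv => (hedge u v huv).2, ?_⟩
    intro u v w huv hvw huw
    rcases cycleGraph_adj_iff_eq_add_one.1 huv with rfl | rfl <;>
      rcases cycleGraph_adj_iff_eq_add_one.1 hvw with h | rfl
    · subst h
      rw [two]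
      exact (hpath w).symm.2.2
    · exact absurd rfl huw
    · exact absurd (add_right_cancel h) huw
    · rw [two]
      exact (hpath u).2.2

theorem Function.Periodic.fin_one_of_coprime {α : Type*} {N p : ℕ} [NeZero N] {f : Fin N → α}
    (hf : Function.Periodic f (p : Fin N)) (hp : p.Coprime N) : Function.Periodic f 1 := by
  obtain ⟨m, -, hm⟩ := Nat.exists_mul_mod_eq_of_coprime 1 hp (NeZero.ne N)
  have hunit : (m : Fin N) * (p : Fin N) = 1 := by
    ext
    simp [Fin.val_mul, ← hm, Nat.mul_comm]
  exact hunit ▸ hf.nat_mul m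

theorem four_le_of_isTotalDiffLabeling_cycleGraph {n k : ℕ} {c : Fin (n + 3) → ℕ}
    (hc : IsTotalDiffLabeling (cycleGraph (n + 3)) k c) : 4 ≤ k := by
  rw [isTotalDiffLabeling_cycleGraph_iff] at hc
  obtain ⟨hbound, hpath⟩ := hc
  by_contra! hk
  have hle : ∀ i, c i ≤ 3 := fun i => (hbound i).2.trans (by omega)
  have h1 : c 1 = 3 := (hpath 0).eq_three (hle _) (hle _) (hle _)
  have h2 : c (1 + 1) = 3 := (hpath 1).eq_three (hle _) (hle _) (hle _)
  exact (hpath 1).1.1 (h1.trans h2.symm)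

theorem five_le_of_isTotalDiffLabeling_cycleGraph {n k : ℕ} {c : Fin (n + 3) → ℕ}
    (hn : ¬ 3 ∣ n) (hc : IsTotalDiffLabeling (cycleGraph (n + 3)) k c) : 5 ≤ k := by
  rw [isTotalDiffLabeling_cycleGraph_iff] at hc
  obtain ⟨hbound, hpath⟩ := hc
  by_contra! hk
  have hle : ∀ i, c i ≤ 4 := fun i => (hbound i).2.trans (by omega)
  have hne : ∀ i, c i ≠ 2 := fun i => by
    simpa using (hpath (i - 1)).ne_two (hle _) (hle _)
  have hsum : ∀ i, c i + c (i + 1) + c (i + 2) = 8 := fun i =>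
    (hpath i).add_eq_eight (hle _) (hle _) (hle _) (hne _) (hne _) (hne _)
  have hper : Function.Periodic c ((3 : ℕ) : Fin (n + 3)) := fun i => by
    have h0 := hsum i
    have h1 := hsum (i + 1)
    rw [show i + 1 + 1 = i + 2 by ring, show i + 1 + 2 = i + (3 : ℕ) by push_cast; ring] at h1
    omega
  have hcop : Nat.Coprime 3 (n + 3) := by
    rw [Nat.Prime.coprime_iff_not_dvd Nat.prime_three]
    omega
  have := hper.fin_one_of_coprime hcop 0
  rw [zero_add] at this
  exact (hpath 0).1.1 this.symm

def IsTotalDiffCycleWord (w : List ℕ) : Prop :=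
  ∀ j < w.length,
    IsTotalDiffPath (w.getD j 0) (w.getD ((j + 1) % w.length) 0) (w.getD ((j + 2) % w.length) 0)

instance (w : List ℕ) : Decidable (IsTotalDiffCycleWord w) := inferInstanceAs (Decidable (∀ _, _))

-- The cyclic windows of the new word are `1 3 4`, `3 4 1`, `4 1 3` and those of the old one,
-- because both words begin with `1 3`.
theorem isTotalDiffCycleWord_cons {v : List ℕ} (hv : IsTotalDiffCycleWord (1 :: 3 :: v)) :
    IsTotalDiffCycleWord (1 :: 3 :: 4 :: 1 :: 3 :: v) := by
  have hlen : (1 :: 3 :: 4 :: 1 :: 3 :: v).length = v.length + 5 := rfl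
  intro j hj
  rw [hlen] at hj ⊢
  rcases lt_or_ge j 3 with hj3 | hj3
  · have h5 : ∀ i < 5, i % (v.length + 5) = i := fun i hi => Nat.mod_eq_of_lt (by omega)
    interval_cases j <;>
      simp only [h5, Nat.reduceAdd, Nat.reduceLT, List.getD_cons_zero, List.getD_cons_succ] <;>
      decide
  obtain ⟨j, rfl⟩ : ∃ i, j = i + 3 := ⟨j - 3, by omega⟩
  have shift : ∀ k ≤ 2, (1 :: 3 :: 4 :: 1 :: 3 :: v).getD ((j + 3 + k) % (v.length + 5)) 0 =
      (1 :: 3 :: v).getD ((j + k) % (v.length + 2)) 0 := by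
    intro k hk
    rcases lt_or_ge (j + k) (v.length + 2) with hjk | hjk
    · rw [Nat.mod_eq_of_lt hjk, Nat.mod_eq_of_lt (by omega), show j + 3 + k = j + k + 3 by omega]
      rfl
    · have hnew : (j + 3 + k) % (v.length + 5) = j + k - (v.length + 2) := by
        rw [Nat.mod_eq_sub_mod (by omega), Nat.mod_eq_of_lt (by omega)]
        omega
      have hold : (j + k) % (v.length + 2) = j + k - (v.length + 2) := by
        rw [Nat.mod_eq_sub_mod hjk, Nat.mod_eq_of_lt (by omega)]
      rw [hnew, hold]
      obtain h | h : j + k - (v.length + 2) = 0 ∨ j + k - (v.length + 2) = 1 := by omega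
      all_goals rw [h]; rfl
  have e0 := shift 0 (by omega)
  rw [add_zero, add_zero, Nat.mod_eq_of_lt (by omega), Nat.mod_eq_of_lt (by omega)] at e0
  rw [e0, shift 1 (by omega), shift 2 (by omega)]
  exact hv j (by simp only [List.length_cons]; omega)

-- The labels of `C (n + 3)`, read around the cycle.
def cycleWord : ℕ → List ℕ
  | 0 => [1, 3, 4]
  | 1 => [1, 3, 2, 5]
  | 2 => [1, 3, 2, 5, 4]
  | n + 3 => 1 :: 3 :: 4 :: cycleWord n

theorem length_cycleWord (n : ℕ) : (cycleWord n).length = n + 3 := by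
  induction n using cycleWord.induct <;> simp [cycleWord, *]

theorem exists_cycleWord_eq_cons (n : ℕ) : ∃ v, cycleWord n = 1 :: 3 :: v := by
  cases n using cycleWord.induct <;> simp [cycleWord]

theorem cycleWord_mem_bounds {n x : ℕ} (hx : x ∈ cycleWord n) :
    1 ≤ x ∧ x ≤ if n % 3 = 0 then 4 else 5 := by
  induction n using cycleWord.induct with
  | case1 | case2 | case3 => revert x; decide
  | case4 n ih =>
    simp only [cycleWord, List.mem_cons] at hx
    change 1 ≤ x ∧ x ≤ if (n + 3) % 3 = 0 then 4 else 5
    rw [Nat.add_mod_right]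
    rcases hx with rfl | rfl | rfl | hx
    any_goals split_ifs <;> omega
    exact ih hx

theorem isTotalDiffCycleWord_cycleWord (n : ℕ) : IsTotalDiffCycleWord (cycleWord n) := by
  induction n using cycleWord.induct with
  | case1 | case2 | case3 => decide
  | case4 n ih =>
    obtain ⟨v, hv⟩ := exists_cycleWord_eq_cons n
    rw [hv] at ih
    simp only [cycleWord, hv]
    exact isTotalDiffCycleWord_cons ih

theorem isTotalDiffLabeling_cycleWord (n : ℕ) :
    IsTotalDiffLabeling (cycleGraph (n + 3)) (if n % 3 = 0 then 4 else 5)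
      (fun i => (cycleWord n).getD i 0) := by
  have hlen := length_cycleWord n
  rw [isTotalDiffLabeling_cycleGraph_iff]
  refine ⟨fun i => cycleWord_mem_bounds ?_, fun i => ?_⟩
  · rw [List.getD_eq_getElem _ _ (by omega)]
    exact List.getElem_mem _
  · have := isTotalDiffCycleWord_cycleWord n i (by omega)
    simpa [hlen, Fin.val_add] using this

theorem tdChromatic_eq_of_isTotalDiffLabeling {V : Type*} {G : SimpleGraph V} {k : ℕ}
    {c : V → ℕ} (hc : IsTotalDiffLabeling G k c)
    (hmin : ∀ l c', IsTotalDiffLabeling G l c' → k ≤ l) :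
    tdChromatic G = k :=
  le_antisymm (Nat.sInf_le ⟨c, hc⟩) (le_csInf ⟨k, c, hc⟩ fun _ ⟨c', hc'⟩ => hmin _ c' hc')

/-- For every cycle `C_n` with `n ≥ 3`, `χ_td(C_n) = 4` if `3 ∣ n` and `χ_td(C_n) = 5`
otherwise. -/
theorem tdChromatic_cycleGraph (n : ℕ) (hn : 3 ≤ n) :
    tdChromatic (cycleGraph n) = if n % 3 = 0 then 4 else 5 := by
  obtain ⟨n, rfl⟩ : ∃ m, n = m + 3 := ⟨n - 3, by omega⟩
  rw [Nat.add_mod_right]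
  refine tdChromatic_eq_of_isTotalDiffLabeling (isTotalDiffLabeling_cycleWord n) fun k c hc => ?_
  split_ifs with h
  · exact four_le_of_isTotalDiffLabeling_cycleGraph hc
  · exact five_le_of_isTotalDiffLabeling_cycleGraph (by omega) hc
end

section
/- For every star K_{1,m} with m ≥ 1, the total difference chromatic number is χ_td(K_{1,m}) = m + 1 if m is even, and χ_td(K_{1,m}) = m + 2 if m is odd. -/
/-!
In a total difference labeling `c`, the neighbours of a vertex `v` carry distinct labels (their
edges to `v` have distinct differences) other than `c v`, so `deg v < k`. If `deg v = k - 1`,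
every label of `{1,…,k}` other than `a = c v` occurs on a neighbour. Then `2a > k` (a neighbour
labelled `2a` would see the difference `a`), `a` is odd (a neighbour labelled `a / 2` would see
its own label), and `a = k` (neighbours labelled `a ± 1` would both see the difference `1`); so
`k` is odd. At the centre of `K_{1,m}` this gives `k ≥ m + 1`, and `k ≥ m + 2` for odd `m`.
Conversely, labelling the centre by an odd `K > m` and leaf `i` by `i` works: the differences
`K - i` are distinct, below `K`, and never equal to `i`.
-/

open SimpleGraph

/-- The star `K_{1,m}`: the center is `0 : Fin (m+1)` and the leaves are the other
`m` vertices. -/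
def starGraph (m : ℕ) : SimpleGraph (Fin (m + 1)) :=
  SimpleGraph.fromRel (fun i _ => i = 0)

namespace IsTotalDiffLabeling

variable {V : Type*} {G : SimpleGraph V} {k : ℕ} {c : V → ℕ}

theorem dist_ne_left (h : IsTotalDiffLabeling G k c) {v u : V} (hvu : G.Adj v u) :
    Nat.dist (c v) (c u) ≠ c v :=
  (h.2.2.1 v u hvu).1

theorem dist_ne_right (h : IsTotalDiffLabeling G k c) {v u : V} (hvu : G.Adj v u) :
    Nat.dist (c v) (c u) ≠ c u :=
  (h.2.2.1 v u hvu).2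

theorem dist_ne_of_adj_of_adj (h : IsTotalDiffLabeling G k c) {v u w : V} (hvu : G.Adj v u)
    (hvw : G.Adj v w) (huw : u ≠ w) : Nat.dist (c v) (c u) ≠ Nat.dist (c v) (c w) := by
  rw [Nat.dist_comm]
  exact h.2.2.2 u v w hvu.symm hvw huw

variable (v : V) [Fintype (G.neighborSet v)]

theorem injOn_neighborFinset (h : IsTotalDiffLabeling G k c) :
    Set.InjOn c (G.neighborFinset v) := by
  intro u hu w hw hcuw
  by_contra huw
  rw [Finset.mem_coe, mem_neighborFinset] at hu hw
  exact h.dist_ne_of_adj_of_adj hu hw huw (by rw [hcuw])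

theorem mapsTo_neighborFinset (h : IsTotalDiffLabeling G k c) :
    Set.MapsTo c (G.neighborFinset v) ((Finset.Icc 1 k).erase (c v)) := by
  intro u hu
  rw [Finset.mem_coe, mem_neighborFinset] at hu
  rw [Finset.mem_coe, Finset.mem_erase, Finset.mem_Icc]
  exact ⟨(h.2.1 v u hu).symm, h.1 u⟩

theorem degree_lt (h : IsTotalDiffLabeling G k c) : G.degree v < k := by
  have hcard := Finset.card_le_card_of_injOn c
    (h.mapsTo_neighborFinset v) (h.injOn_neighborFinset v)
  rw [card_neighborFinset_eq_degree, Finset.card_erase_of_mem (by simpa using h.1 v),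
    Nat.card_Icc] at hcard
  have := h.1 v
  omega

theorem image_neighborFinset_eq (h : IsTotalDiffLabeling G k c) (hv : G.degree v + 1 = k) :
    (G.neighborFinset v).image c = (Finset.Icc 1 k).erase (c v) := by
  refine Finset.eq_of_subset_of_card_le ?_ ?_
  · exact Finset.image_subset_iff.2 (h.mapsTo_neighborFinset v)
  · rw [Finset.card_image_of_injOn (h.injOn_neighborFinset v),
      card_neighborFinset_eq_degree, Finset.card_erase_of_mem (by simpa using h.1 v),
      Nat.card_Icc]
    omega

theorem exists_adj_of_degree_add_one_eq (h : IsTotalDiffLabeling G k c) (hv : G.degree v + 1 = k)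
    {b : ℕ} (hb₁ : 1 ≤ b) (hbk : b ≤ k) (hbv : b ≠ c v) : ∃ u, G.Adj v u ∧ c u = b := by
  have hb : b ∈ (G.neighborFinset v).image c := by
    rw [h.image_neighborFinset_eq v hv]
    simp [hbv, hb₁, hbk]
  simpa using hb

theorem odd_of_degree_add_one_eq (h : IsTotalDiffLabeling G k c) (hv : G.degree v + 1 = k) :
    Odd k := by
  set a := c v with ha
  have ha₁ : 1 ≤ a := (h.1 v).1
  have hak : a ≤ k := (h.1 v).2
  have hlt : k < 2 * a := by
    by_contra! hle
    obtain ⟨u, hvu, hu⟩ := h.exists_adj_of_degree_add_one_eq v hv (b := 2 * a) (by omega) hle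
      (by omega)
    exact h.dist_ne_left hvu (by rw [hu, ← ha, Nat.dist]; omega)
  have ha_odd : Odd a := by
    by_contra! ha_even
    obtain ⟨b, hb⟩ := Nat.not_odd_iff_even.1 ha_even
    obtain ⟨u, hvu, hu⟩ := h.exists_adj_of_degree_add_one_eq v hv (b := b) (by omega)
      (by omega) (by omega)
    exact h.dist_ne_right hvu (by rw [hu, ← ha, Nat.dist]; omega)
  have ha_eq : a = k := by
    by_contra! hne
    obtain ⟨b, hb⟩ := ha_odd
    obtain ⟨u, hvu, hu⟩ := h.exists_adj_of_degree_add_one_eq v hv (b := a - 1) (by omega)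
      (by omega) (by omega)
    obtain ⟨w, hvw, hw⟩ := h.exists_adj_of_degree_add_one_eq v hv (b := a + 1) (by omega)
      (by omega) (by omega)
    have huw : u ≠ w := by rintro rfl; omega
    exact h.dist_ne_of_adj_of_adj hvu hvw huw (by rw [hu, hw, ← ha, Nat.dist, Nat.dist]; omega)
  exact ha_eq ▸ ha_odd

end IsTotalDiffLabeling

theorem starGraph_eq_starGraph_zero (m : ℕ) :
    _root_.starGraph m = SimpleGraph.starGraph (0 : Fin (m + 1)) :=
  rfl

theorem isTotalDiffLabeling_starGraph {m K : ℕ} (hK : Odd K) (hmK : m < K) :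
    IsTotalDiffLabeling (_root_.starGraph m) K (fun i => if i = 0 then K else i) := by
  obtain ⟨j, rfl⟩ := hK
  simp only [IsTotalDiffLabeling, starGraph_eq_starGraph_zero, starGraph_adj, Fin.ext_iff,
    Fin.val_zero, Nat.dist]
  refine ⟨fun v => ?_, fun u v huv => ?_, fun u v huv => ?_, fun u v w huv hvw huw => ?_⟩ <;>
    split_ifs <;> omega

theorem le_of_isTotalDiffLabeling_starGraph {m k : ℕ} {c : Fin (m + 1) → ℕ}
    (h : IsTotalDiffLabeling (_root_.starGraph m) k c) :
    (if Even m then m + 1 else m + 2) ≤ k := by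
  rw [starGraph_eq_starGraph_zero] at h
  have hdeg : (SimpleGraph.starGraph (0 : Fin (m + 1))).degree 0 = m := by
    rw [degree_starGraph_center, Fintype.card_fin, Nat.add_sub_cancel]
  have hlt := h.degree_lt 0
  split_ifs with hm
  · omega
  · by_contra! hk
    have hodd := h.odd_of_degree_add_one_eq 0 (by omega)
    rw [show k = m + 1 by omega, Nat.odd_add_one] at hodd
    exact hm (Nat.not_odd_iff_even.1 hodd)

theorem tdChromatic_starGraph_general (m : ℕ) :
    tdChromatic (_root_.starGraph m) = if Even m then m + 1 else m + 2 := by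
  refine IsLeast.csInf_eq ⟨⟨_, isTotalDiffLabeling_starGraph ?_ ?_⟩,
    fun k ⟨c, hc⟩ => le_of_isTotalDiffLabeling_starGraph hc⟩
  · split_ifs with hm
    · exact hm.add_one
    · exact (Nat.not_even_iff_odd.1 hm).add_even even_two
  · split_ifs <;> omega

/-- For every star `K_{1,m}` with `m ≥ 1`: `χ_td(K_{1,m}) = m + 1` if `m` is even, and
`χ_td(K_{1,m}) = m + 2` if `m` is odd. -/
theorem tdChromatic_starGraph (m : ℕ) (hm : 1 ≤ m) :
    tdChromatic (_root_.starGraph m) = if Even m then m + 1 else m + 2 :=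
  tdChromatic_starGraph_general m
end

section
/- Let K_{1,m} be a star with center v_0 and m ≥ 2. If m is even, then in every (m+1)-total difference labeling c of K_{1,m}, the center satisfies c(v_0) = m + 1. If m is odd, then in every (m+2)-total difference labeling c of K_{1,m}, the center satisfies c(v_0) = 1 or c(v_0) = m + 2. -/
open SimpleGraph

/-! The `m` edge labels at the center are pairwise distinct and avoid the center's label `a`.
A leaf label `x ≤ k` gives `|a - x| ≤ max (a - 1) (k - a)`, so when `k ≤ m + a ≤ 2m` all edge
labels lie in `{1,…,m} \ {a}`, which has only `m - 1` elements. For `m` odd and `a = m + 1`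
they lie in `{1,…,m}` and also avoid `(m + 1) / 2`: that edge label needs the leaf label
`(m + 1) / 2`, equal to the edge label, or `3 (m + 1) / 2`, which exceeds `k` once
`2k < 3 (m + 1)`. -/

namespace IsTotalDiffLabeling

variable {V : Type*} {G : SimpleGraph V} {k : ℕ} {c : V → ℕ}

lemma injOn_dist_neighborSet (h : IsTotalDiffLabeling G k c) (v : V) :
    Set.InjOn (fun u => Nat.dist (c v) (c u)) (G.neighborSet v) := by
  intro u hu w hw huw
  by_contra hne
  exact h.2.2.2 u v w hu.symm hw hne (by rwa [Nat.dist_comm])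

lemma card_le_card_of_dist_mem (h : IsTotalDiffLabeling G k c) (v : V) {T : Finset V}
    (hT : ∀ u ∈ T, G.Adj v u) {S : Finset ℕ} (hS : ∀ u ∈ T, Nat.dist (c v) (c u) ∈ S) :
    T.card ≤ S.card :=
  Finset.card_le_card_of_injOn _ hS ((h.injOn_dist_neighborSet v).mono hT)

end IsTotalDiffLabeling

lemma starGraph_adj_zero {m : ℕ} {i : Fin (m + 1)} : (_root_.starGraph m).Adj 0 i ↔ i ≠ 0 := by
  simp [_root_.starGraph, SimpleGraph.fromRel_adj, eq_comm]

namespace IsTotalDiffLabeling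

variable {m k : ℕ} {c : Fin (m + 1) → ℕ}

lemma starGraph_le_card (h : IsTotalDiffLabeling (_root_.starGraph m) k c) {S : Finset ℕ}
    (hS : ∀ x, 1 ≤ x → x ≤ k → x ≠ c 0 → Nat.dist (c 0) x ≠ c 0 → Nat.dist (c 0) x ≠ x →
      Nat.dist (c 0) x ∈ S) :
    m ≤ S.card := by
  have hT : (Finset.univ.erase (0 : Fin (m + 1))).card = m := by simp
  refine hT ▸ h.card_le_card_of_dist_mem 0 (fun u hu => ?_) fun u hu => ?_
  · exact starGraph_adj_zero.2 (Finset.ne_of_mem_erase hu)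
  · have hadj := starGraph_adj_zero.2 (Finset.ne_of_mem_erase hu)
    obtain ⟨hdist, hdist'⟩ := h.2.2.1 0 u hadj
    exact hS _ (h.1 u).1 (h.1 u).2 (h.2.1 0 u hadj).symm hdist hdist'

lemma starGraph_lt_center (h : IsTotalDiffLabeling (_root_.starGraph m) k c)
    (hk : k ≤ m + c 0) : m < c 0 := by
  by_contra! hc
  have h1 := (h.1 0).1
  have := h.starGraph_le_card (S := (Finset.Icc 1 m).erase (c 0)) fun x _ _ _ _ _ => by
    simp only [Finset.mem_erase, Finset.mem_Icc, Nat.dist] at *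
    omega
  rw [Finset.card_erase_of_mem (by rw [Finset.mem_Icc]; omega), Nat.card_Icc] at this
  omega

lemma starGraph_center_ne_succ (h : IsTotalDiffLabeling (_root_.starGraph m) k c) (hm : Odd m)
    (hk : 2 * k < 3 * (m + 1)) : c 0 ≠ m + 1 := by
  intro hc
  obtain ⟨t, rfl⟩ := hm
  have := h.starGraph_le_card (S := (Finset.Icc 1 (2 * t + 1)).erase (t + 1))
    fun x _ _ _ _ _ => by
      simp only [Finset.mem_erase, Finset.mem_Icc, Nat.dist, hc] at *
      omega
  rw [Finset.card_erase_of_mem (by rw [Finset.mem_Icc]; omega), Nat.card_Icc] at this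
  omega

end IsTotalDiffLabeling

/-- For the star `K_{1,m}` with `m ≥ 2`: if `m` is even, then every `(m+1)`-total
difference labeling gives the center the label `m+1`; if `m` is odd, then every
`(m+2)`-total difference labeling gives the center the label `1` or `m+2`. -/
theorem starGraph_center_label (m : ℕ) (hm : 2 ≤ m) :
    (Even m → ∀ c : Fin (m + 1) → ℕ,
      IsTotalDiffLabeling (_root_.starGraph m) (m + 1) c → c 0 = m + 1) ∧
    (Odd m → ∀ c : Fin (m + 1) → ℕ,
      IsTotalDiffLabeling (_root_.starGraph m) (m + 2) c → c 0 = 1 ∨ c 0 = m + 2) := by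
  refine ⟨fun _ c hc => ?_, fun hodd c hc => ?_⟩
  · obtain ⟨hc1, hck⟩ := hc.1 0
    have hgt : m < c 0 := hc.starGraph_lt_center (by omega)
    omega
  · obtain ⟨hc1, hck⟩ := hc.1 0
    rcases hc1.eq_or_lt with hc1 | hc2
    · exact .inl hc1.symm
    · have hgt : m < c 0 := hc.starGraph_lt_center (by omega)
      have hne : c 0 ≠ m + 1 := hc.starGraph_center_ne_succ hodd (by omega)
      exact .inr (by omega)
end

section
/- For every integer Δ ≥ 2, the uniform full Δ-ary tree of height 2 satisfies χ_td(T_{Δ,2}) = ⌊(3Δ + 3)/2⌋. -/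
open SimpleGraph

/-- `G` is a uniform full `Δ`-ary tree of height `h` rooted at `r`: a tree in which
every vertex is at distance at most `h` from `r`, every vertex at distance less than
`h` from `r` has degree `Δ`, and every vertex at distance exactly `h` from `r` is a
leaf. -/
def IsUniformFullTree {V : Type*} [Fintype V] (G : SimpleGraph V) [DecidableRel G.Adj]
    (Δ h : ℕ) (r : V) : Prop :=
  G.IsTree ∧ (∀ v : V, G.dist r v ≤ h) ∧
    (∀ v : V, G.dist r v < h → G.degree v = Δ) ∧
    (∀ v : V, G.dist r v = h → G.degree v = 1)

/-!
A vertex of degree `Δ` labelled `x ∈ [1, k]` needs `Δ` distinct differences `d`, each carried by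
an edge to `x + d` or `x - d` with `d` different from both end labels. For
`k < ⌊(3Δ + 3) / 2⌋` at most `Δ - 1` labels, all near the two ends of `[1, k]`, admit that many,
whereas the root and its `Δ` children need `Δ + 1` distinct ones. For `k = ⌊(3Δ + 3) / 2⌋` the
root gets `k`, the children get `Δ` labels near the two ends of `[1, k - 1]`, and the leaves below
a child get distinct admissible differences avoiding the one on the edge to the root.
-/

open Finset

/-- The differences an edge at a vertex labelled `x` can carry when labels lie in `[1, k]`;
the other end of such an edge can be labelled `neighborLabel k x d`. -/
def admissibleDiffs (k x : ℕ) : Finset ℕ :=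
  (Icc 1 k).filter fun d => d ≠ x ∧ (x + d ≤ k ∨ (d < x ∧ 2 * d ≠ x))

def neighborLabel (k x d : ℕ) : ℕ := if x + d ≤ k then x + d else x - d

def IsDiffEdge (x y : ℕ) : Prop := x ≠ y ∧ Nat.dist x y ≠ x ∧ Nat.dist x y ≠ y

lemma Finset.exists_mapsTo_injOn_of_card_le {α β : Type*} [Nonempty β] {s : Finset α} {t : Finset β}
    (h : #s ≤ #t) : ∃ f : α → β, Set.MapsTo f s t ∧ Set.InjOn f s :=
  s.finite_toSet.exists_injOn_of_encard_le (t := (t : Set β)) (by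
    rw [Set.encard_coe_eq_coe_finsetCard, Set.encard_coe_eq_coe_finsetCard]
    exact_mod_cast h)

section Arithmetic

variable {k x y d Δ : ℕ}

lemma IsDiffEdge.symm (h : IsDiffEdge x y) : IsDiffEdge y x := by
  obtain ⟨hxy, hx, hy⟩ := h
  exact ⟨hxy.symm, Nat.dist_comm x y ▸ hy, Nat.dist_comm x y ▸ hx⟩

lemma dist_mem_admissibleDiffs (hx : x ∈ Icc 1 k) (hy : y ∈ Icc 1 k) (h : IsDiffEdge x y) :
    Nat.dist x y ∈ admissibleDiffs k x := by
  obtain ⟨hxy, hdx, hdy⟩ := h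
  simp only [Nat.dist, mem_Icc] at *
  simp only [admissibleDiffs, mem_filter, mem_Icc]
  omega

lemma neighborLabel_mem_Icc (hx : x ∈ Icc 1 k) (hd : d ∈ admissibleDiffs k x) :
    neighborLabel k x d ∈ Icc 1 k := by
  simp only [admissibleDiffs, neighborLabel, mem_filter, mem_Icc] at *
  split_ifs <;> omega

lemma dist_neighborLabel (hd : d ∈ admissibleDiffs k x) :
    Nat.dist x (neighborLabel k x d) = d := by
  simp only [admissibleDiffs, neighborLabel, mem_filter, mem_Icc, Nat.dist] at *
  split_ifs <;> omega

lemma isDiffEdge_neighborLabel (hx : 1 ≤ x) (hd : d ∈ admissibleDiffs k x) :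
    IsDiffEdge x (neighborLabel k x d) := by
  rw [IsDiffEdge, dist_neighborLabel hd]
  simp only [admissibleDiffs, neighborLabel, mem_filter, mem_Icc] at *
  split_ifs <;> omega

lemma neighborLabel_self_sub (h : x ≤ k) : neighborLabel k k (k - x) = x := by
  unfold neighborLabel
  split_ifs <;> omega

lemma admissibleDiffs_subset_erase (hk : k < (3 * Δ + 3) / 2) (hx : 1 ≤ x)
    (hlow : k - Δ - 1 < x) (hhigh : x < Δ + 1 + Δ % 2) :
    ∃ e ∈ Icc 1 Δ, admissibleDiffs k x ⊆ (Icc 1 Δ).erase e := by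
  refine ⟨if x ≤ Δ then x else (Δ + 1) / 2, ?_, fun d hd => ?_⟩
  · simp only [mem_Icc]
    split_ifs <;> omega
  · simp only [admissibleDiffs, mem_filter, mem_Icc, mem_erase] at hd ⊢
    split_ifs <;> omega

lemma card_filter_le_card_admissibleDiffs_lt (hk : k < (3 * Δ + 3) / 2) :
    #((Icc 1 k).filter fun x => Δ ≤ #(admissibleDiffs k x)) < Δ + 1 := by
  have hsub : (Icc 1 k).filter (fun x => Δ ≤ #(admissibleDiffs k x)) ⊆
      Icc 1 (k - Δ - 1) ∪ Icc (Δ + 1 + Δ % 2) k := by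
    intro x hx
    simp only [mem_filter, mem_Icc] at hx
    simp only [mem_union, mem_Icc]
    by_contra! hmid
    obtain ⟨e, he, hsub⟩ := admissibleDiffs_subset_erase hk hx.1.1 (by omega) (by omega)
    have := card_le_card hsub
    rw [card_erase_of_mem he, Nat.card_Icc] at this
    omega
  calc _ ≤ #(Icc 1 (k - Δ - 1) ∪ Icc (Δ + 1 + Δ % 2) k) := card_le_card hsub
    _ ≤ #(Icc 1 (k - Δ - 1)) + #(Icc (Δ + 1 + Δ % 2) k) := card_union_le _ _
    _ < Δ + 1 := by simp only [Nat.card_Icc]; omega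

/-- Labels for the children of a root labelled `⌊(3Δ + 3) / 2⌋`: a small one carries every
difference up to `Δ + 1` upwards, a large one all but one of them downwards. -/
def childLabels (Δ : ℕ) : Finset ℕ :=
  Icc 1 ((3 * Δ + 3) / 2 - Δ - 1) ∪ Icc (Δ + 1) ((3 * Δ + 3) / 2 - 1)

lemma le_card_childLabels : Δ ≤ #(childLabels Δ) := by
  rw [childLabels, card_union_of_disjoint, Nat.card_Icc, Nat.card_Icc]
  · omega
  · exact disjoint_left.2 fun a ha hb => by simp only [mem_Icc] at ha hb; omega

lemma sub_mem_admissibleDiffs_of_mem_childLabels (hx : x ∈ childLabels Δ) :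
    (3 * Δ + 3) / 2 - x ∈ admissibleDiffs ((3 * Δ + 3) / 2) ((3 * Δ + 3) / 2) := by
  simp only [childLabels, admissibleDiffs, mem_union, mem_filter, mem_Icc] at hx ⊢
  omega

lemma mem_Icc_of_mem_childLabels (hx : x ∈ childLabels Δ) : x ∈ Icc 1 ((3 * Δ + 3) / 2) := by
  simp only [childLabels, mem_union, mem_Icc] at hx ⊢
  omega

lemma erase_subset_admissibleDiffs_of_mem_childLabels (hx : x ∈ childLabels Δ) :
    (Icc 1 (Δ + 1)).erase (if x ≤ Δ + 1 then x else x / 2) ⊆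
      admissibleDiffs ((3 * Δ + 3) / 2) x := by
  intro d hd
  simp only [childLabels, admissibleDiffs, mem_union, mem_filter, mem_Icc, mem_erase] at hx hd ⊢
  split_ifs at hd <;> omega

lemma le_card_erase_admissibleDiffs_of_mem_childLabels (hx : x ∈ childLabels Δ) :
    Δ - 1 ≤ #((admissibleDiffs ((3 * Δ + 3) / 2) x).erase ((3 * Δ + 3) / 2 - x)) := by
  have h := card_le_card (erase_subset_admissibleDiffs_of_mem_childLabels hx)
  have := pred_card_le_card_erase (s := Icc 1 (Δ + 1)) (a := if x ≤ Δ + 1 then x else x / 2)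
  have := pred_card_le_card_erase (s := admissibleDiffs ((3 * Δ + 3) / 2) x)
    (a := (3 * Δ + 3) / 2 - x)
  simp only [Nat.card_Icc] at *
  omega

end Arithmetic

section Labeling

variable {V : Type*} {G : SimpleGraph V} {k : ℕ} {c : V → ℕ}

namespace IsTotalDiffLabeling

lemma mem_Icc (hc : IsTotalDiffLabeling G k c) (v : V) : c v ∈ Icc 1 k :=
  Finset.mem_Icc.2 (hc.1 v)

lemma isDiffEdge (hc : IsTotalDiffLabeling G k c) {u v : V} (h : G.Adj u v) :
    IsDiffEdge (c u) (c v) :=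
  ⟨hc.2.1 u v h, hc.2.2.1 u v h⟩

lemma degree_le_card_admissibleDiffs [Fintype V] [DecidableRel G.Adj]
    (hc : IsTotalDiffLabeling G k c) (v : V) : G.degree v ≤ #(admissibleDiffs k (c v)) := by
  rw [← card_neighborFinset_eq_degree]
  refine card_le_card_of_injOn (fun w => Nat.dist (c v) (c w)) (fun w hw => ?_) ?_
  · exact dist_mem_admissibleDiffs (hc.mem_Icc v) (hc.mem_Icc w)
      (hc.isDiffEdge ((mem_neighborFinset G v w).1 hw))
  · intro w hw w' hw' h
    by_contra hne
    exact hc.2.2.2 w v w' ((mem_neighborFinset G v w).1 hw).symm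
      ((mem_neighborFinset G v w').1 hw') hne (by rwa [Nat.dist_comm])

lemma injOn_insert_neighborSet (hc : IsTotalDiffLabeling G k c) (v : V) :
    Set.InjOn c (insert v (G.neighborSet v)) := by
  intro u hu w hw h
  simp only [Set.mem_insert_iff, mem_neighborSet] at hu hw
  by_contra hne
  rcases hu with rfl | hu <;> rcases hw with rfl | hw
  · exact hne rfl
  · exact hc.2.1 _ _ hw h
  · exact hc.2.1 _ _ hu h.symm
  · exact hc.2.2.2 u v w hu.symm hw hne (by rw [h, Nat.dist_comm])

theorem le_of_le_degree [Fintype V] [DecidableRel G.Adj] (hc : IsTotalDiffLabeling G k c)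
    {Δ : ℕ} {r : V} (hr : Δ ≤ G.degree r) (hnbr : ∀ u, G.Adj r u → Δ ≤ G.degree u) :
    (3 * Δ + 3) / 2 ≤ k := by
  classical
  by_contra! hk
  have hmaps : Set.MapsTo c (insert r (G.neighborFinset r) : Finset V)
      ((Icc 1 k).filter fun x => Δ ≤ #(admissibleDiffs k x)) := by
    intro v hv
    have hdeg : Δ ≤ G.degree v := by
      simp only [coe_insert, coe_neighborFinset, Set.mem_insert_iff, mem_neighborSet] at hv
      rcases hv with rfl | hv
      exacts [hr, hnbr v hv]
    exact mem_filter.2 ⟨hc.mem_Icc v, hdeg.trans (hc.degree_le_card_admissibleDiffs v)⟩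
  have hcard := card_le_card_of_injOn c hmaps (by
    rw [coe_insert, coe_neighborFinset]
    exact hc.injOn_insert_neighborSet r)
  rw [card_insert_of_notMem (notMem_neighborFinset_self G r), card_neighborFinset_eq_degree]
    at hcard
  have := card_filter_le_card_admissibleDiffs_lt hk
  omega

end IsTotalDiffLabeling

/-- `π` is the parent map of a tree rooted at `r`, and `e v` the difference on the edge from `v`
to its parent. -/
theorem isTotalDiffLabeling_of_parent (r : V) (π : V → V) (e : V → ℕ)
    (hadj : ∀ u v, G.Adj u v ↔ (v ≠ r ∧ π v = u) ∨ (u ≠ r ∧ π u = v))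
    (hbound : ∀ v, c v ∈ Icc 1 k)
    (hdiff : ∀ v, v ≠ r → e v ∈ admissibleDiffs k (c (π v)))
    (hc : ∀ v, v ≠ r → c v = neighborLabel k (c (π v)) (e v))
    (hsib : ∀ v w, v ≠ r → w ≠ r → π v = π w → e v = e w → v = w)
    (hpar : ∀ v, v ≠ r → π v ≠ r → e v ≠ e (π v)) :
    IsTotalDiffLabeling G k c := by
  have hdist : ∀ v, v ≠ r → Nat.dist (c (π v)) (c v) = e v := fun v hv => by
    rw [hc v hv, dist_neighborLabel (hdiff v hv)]
  have hedge : ∀ u v, G.Adj u v → IsDiffEdge (c u) (c v) := by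
    have hdown : ∀ v, v ≠ r → IsDiffEdge (c (π v)) (c v) := fun v hv => by
      rw [hc v hv]
      exact isDiffEdge_neighborLabel (Finset.mem_Icc.1 (hbound _)).1 (hdiff v hv)
    intro u v huv
    rcases (hadj u v).1 huv with ⟨hv, rfl⟩ | ⟨hu, rfl⟩
    exacts [hdown v hv, (hdown u hu).symm]
  refine ⟨fun v => Finset.mem_Icc.1 (hbound v), fun u v h => (hedge u v h).1,
    fun u v h => (hedge u v h).2, fun u v w huv hvw huw => ?_⟩
  rcases (hadj u v).1 huv with ⟨hv, rfl⟩ | ⟨hu, rfl⟩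
  · rcases (hadj _ w).1 hvw with ⟨hw, rfl⟩ | ⟨-, rfl⟩
    · rw [hdist _ hv, hdist w hw]
      exact (hpar w hw hv).symm
    · exact absurd rfl huw
  · rcases (hadj _ w).1 hvw with ⟨hw, hwu⟩ | ⟨hv, rfl⟩
    · rw [Nat.dist_comm, hdist u hu, ← hwu, hdist w hw]
      exact fun h => huw (hsib u w hu hw hwu.symm h)
    · rw [Nat.dist_comm (c u), hdist u hu, Nat.dist_comm, hdist _ hv]
      exact hpar u hu hv

end Labeling

namespace SimpleGraph

variable {V : Type*} [Fintype V] {G : SimpleGraph V} [DecidableRel G.Adj] {r : V}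

lemma IsTree.exists_parent_of_dist_le_two (hG : G.IsTree) (hh : ∀ v, G.dist r v ≤ 2)
    (hleaf : ∀ v, G.dist r v = 2 → G.degree v = 1) {v : V} (hv : v ≠ r) (hrv : ¬G.Adj r v) :
    ∃ p, G.Adj r p ∧ G.neighborFinset v = {p} := by
  have hdist : G.dist r v = 2 := by
    have h0 : G.dist r v ≠ 0 :=
      (hG.connected r v).dist_eq_zero_iff.not.2 (Ne.symm hv)
    have h1 : G.dist r v ≠ 1 := fun h => hrv (dist_eq_one_iff_adj.1 h)
    have := hh v
    omega
  obtain ⟨p, hp⟩ := card_eq_one.1 ((card_neighborFinset_eq_degree G v).trans (hleaf v hdist))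
  have hvp : G.Adj v p := (mem_neighborFinset G v p).1 (hp ▸ mem_singleton_self p)
  refine ⟨p, dist_eq_one_iff_adj.1 ?_, hp⟩
  have := hG.dist_eq_dist_add_one_of_adj r hvp
  have := hh p
  omega

lemma IsTree.adj_iff_parent (hG : G.IsTree) {π : V → V} (hroot : ∀ v, G.Adj r v → π v = r)
    (hnbr : ∀ v, v ≠ r → ¬G.Adj r v → G.neighborFinset v = {π v}) (u v : V) :
    G.Adj u v ↔ (v ≠ r ∧ π v = u) ∨ (u ≠ r ∧ π u = v) := by
  have hdown : ∀ u v, G.Adj u v → G.dist r v = G.dist r u + 1 → v ≠ r ∧ π v = u := by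
    intro u v huv hd
    have hv : v ≠ r := by rintro rfl; simp at hd
    refine ⟨hv, ?_⟩
    by_cases hrv : G.Adj r v
    · have hu : G.dist r u = 0 := by rw [dist_eq_one_iff_adj.2 hrv] at hd; omega
      rw [hroot v hrv, (hG.connected r u).dist_eq_zero_iff.1 hu]
    · have hu : u ∈ G.neighborFinset v := (mem_neighborFinset G v u).2 huv.symm
      rw [hnbr v hv hrv, mem_singleton] at hu
      exact hu.symm
  have hup : ∀ v, v ≠ r → G.Adj (π v) v := by
    intro v hv
    by_cases hrv : G.Adj r v
    · rwa [hroot v hrv]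
    · exact ((mem_neighborFinset G v _).1 (hnbr v hv hrv ▸ mem_singleton_self _)).symm
  constructor
  · intro huv
    rcases hG.dist_eq_dist_add_one_of_adj r huv with hd | hd
    exacts [Or.inr (hdown v u huv.symm hd), Or.inl (hdown u v huv hd)]
  · rintro (⟨hv, rfl⟩ | ⟨hu, rfl⟩)
    exacts [hup v hv, (hup u hu).symm]

theorem IsTree.isTotalDiffLabeling_of_mapsTo [DecidableEq V] {Δ : ℕ} (hG : G.IsTree)
    {p : V → V} (hp : ∀ v, v ≠ r → ¬G.Adj r v → G.Adj r (p v) ∧ G.neighborFinset v = {p v})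
    {β : V → ℕ} (hβ : Set.MapsTo β (G.neighborSet r) (childLabels Δ))
    (hβinj : Set.InjOn β (G.neighborSet r)) {δ : V → V → ℕ}
    (hδ : ∀ u, G.Adj r u → Set.MapsTo (δ u) (G.neighborSet u \ {r})
      ((admissibleDiffs ((3 * Δ + 3) / 2) (β u)).erase ((3 * Δ + 3) / 2 - β u)))
    (hδinj : ∀ u, G.Adj r u → Set.InjOn (δ u) (G.neighborSet u \ {r})) :
    IsTotalDiffLabeling G ((3 * Δ + 3) / 2) fun v =>
      if v = r then (3 * Δ + 3) / 2 else if G.Adj r v then β v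
      else neighborLabel ((3 * Δ + 3) / 2) (β (p v)) (δ (p v) v) := by
  set k := (3 * Δ + 3) / 2
  have hmemLeaf : ∀ v, v ≠ r → ¬G.Adj r v → v ∈ G.neighborSet (p v) \ {r} := fun v hv hrv =>
    ⟨((mem_neighborFinset G v _).1 ((hp v hv hrv).2 ▸ mem_singleton_self _)).symm, hv⟩
  have hdiffLeaf : ∀ v, v ≠ r → ¬G.Adj r v →
      δ (p v) v ∈ (admissibleDiffs k (β (p v))).erase (k - β (p v)) := fun v hv hrv =>
    hδ _ (hp v hv hrv).1 (hmemLeaf v hv hrv)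
  have hβk : ∀ v, G.Adj r v → β v ∈ Icc 1 k := fun v hv => mem_Icc_of_mem_childLabels (hβ hv)
  refine isTotalDiffLabeling_of_parent r (fun v => if G.Adj r v then r else p v)
    (fun v => if G.Adj r v then k - β v else δ (p v) v)
    (hG.adj_iff_parent (fun v hv => if_pos hv) fun v hv hrv => by
      rw [if_neg hrv]; exact (hp v hv hrv).2)
    (fun v => ?_) (fun v hv => ?_) (fun v hv => ?_) (fun v w hv hw hvw hew => ?_)
    (fun v hv hpv => ?_)
  · split_ifs with hv hrv
    · exact Finset.mem_Icc.2 ⟨by omega, le_rfl⟩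
    · exact hβk v hrv
    · exact neighborLabel_mem_Icc (hβk _ (hp v hv hrv).1) (mem_of_mem_erase (hdiffLeaf v hv hrv))
  · by_cases hrv : G.Adj r v
    · simpa [hrv] using sub_mem_admissibleDiffs_of_mem_childLabels (hβ hrv)
    · simpa [hrv, (hp v hv hrv).1, (hp v hv hrv).1.ne'] using
        mem_of_mem_erase (hdiffLeaf v hv hrv)
  · by_cases hrv : G.Adj r v
    · simpa [hv, hrv] using (neighborLabel_self_sub (Finset.mem_Icc.1 (hβk v hrv)).2).symm
    · simp [hv, hrv, (hp v hv hrv).1, (hp v hv hrv).1.ne']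
  · by_cases hrv : G.Adj r v <;> by_cases hrw : G.Adj r w <;>
      simp only [hrv, hrw, if_true, if_false] at hvw hew
    · have := Finset.mem_Icc.1 (hβk v hrv)
      have := Finset.mem_Icc.1 (hβk w hrw)
      exact hβinj hrv hrw (by omega)
    · exact absurd hvw.symm (hp w hw hrw).1.ne'
    · exact absurd hvw (hp v hv hrv).1.ne'
    · rw [hvw] at hew
      exact hδinj _ (hp w hw hrw).1 (hvw ▸ hmemLeaf v hv hrv) (hmemLeaf w hw hrw) hew
  · by_cases hrv : G.Adj r v
    · simp [hrv] at hpv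
    · simpa [hrv, (hp v hv hrv).1] using ne_of_mem_erase (hdiffLeaf v hv hrv)

theorem IsTree.exists_isTotalDiffLabeling_of_dist_le_two {Δ : ℕ} (hG : G.IsTree)
    (hh : ∀ v, G.dist r v ≤ 2) (hleaf : ∀ v, G.dist r v = 2 → G.degree v = 1)
    (hdeg : ∀ v, G.dist r v < 2 → G.degree v ≤ Δ) :
    ∃ c : V → ℕ, IsTotalDiffLabeling G ((3 * Δ + 3) / 2) c := by
  classical
  choose! p hp using fun v (hv : v ≠ r) (hrv : ¬G.Adj r v) =>
    hG.exists_parent_of_dist_le_two hh hleaf hv hrv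
  obtain ⟨β, hβ, hβinj⟩ := exists_mapsTo_injOn_of_card_le (s := G.neighborFinset r)
    (t := childLabels Δ) (by
      rw [card_neighborFinset_eq_degree]
      exact (hdeg r (by simp)).trans le_card_childLabels)
  rw [coe_neighborFinset] at hβ hβinj
  choose! δ hδ hδinj using fun u (hu : G.Adj r u) =>
    exists_mapsTo_injOn_of_card_le (s := (G.neighborFinset u).erase r)
      (t := (admissibleDiffs ((3 * Δ + 3) / 2) (β u)).erase ((3 * Δ + 3) / 2 - β u)) (by
        rw [card_erase_of_mem ((mem_neighborFinset G u r).2 hu.symm),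
          card_neighborFinset_eq_degree]
        exact (Nat.sub_le_sub_right (hdeg u (by rw [dist_eq_one_iff_adj.2 hu]; omega)) 1).trans
          (le_card_erase_admissibleDiffs_of_mem_childLabels (hβ hu)))
  simp only [coe_erase, coe_neighborFinset] at hδinj
  exact ⟨_, hG.isTotalDiffLabeling_of_mapsTo hp hβ hβinj
    (fun u hu _ hv => hδ u hu (by simpa using hv)) hδinj⟩

end SimpleGraph

theorem tdChromatic_uniformFullTree_height_two_general {V : Type*} [Fintype V]
    (G : SimpleGraph V) [DecidableRel G.Adj] (Δ : ℕ) (r : V)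
    (hG : IsUniformFullTree G Δ 2 r) :
    tdChromatic G = (3 * Δ + 3) / 2 := by
  obtain ⟨hT, hh, hdeg, hleaf⟩ := hG
  have hdr : G.degree r = Δ := hdeg r (by simp)
  have hdu : ∀ u, G.Adj r u → G.degree u = Δ := fun u hu =>
    hdeg u (by rw [dist_eq_one_iff_adj.2 hu]; omega)
  obtain ⟨c, hc⟩ :=
    hT.exists_isTotalDiffLabeling_of_dist_le_two hh hleaf fun v hv => (hdeg v hv).le
  refine le_antisymm (Nat.sInf_le ⟨c, hc⟩) (le_csInf ⟨_, c, hc⟩ ?_)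
  rintro k ⟨c', hc'⟩
  exact hc'.le_of_le_degree hdr.ge fun u hu => (hdu u hu).ge

/-- For `Δ ≥ 2`, the uniform full `Δ`-ary tree of height `2` satisfies
`χ_td(T_{Δ,2}) = ⌊(3Δ + 3) / 2⌋`. -/
theorem tdChromatic_uniformFullTree_height_two {V : Type*} [Fintype V]
    (G : SimpleGraph V) [DecidableRel G.Adj] (Δ : ℕ) (hΔ : 2 ≤ Δ) (r : V)
    (hG : IsUniformFullTree G Δ 2 r) :
    tdChromatic G = (3 * Δ + 3) / 2 :=
  tdChromatic_uniformFullTree_height_two_general G Δ r hG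
end
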